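/- Let 0 < α < 1, 0 ≤ γ < 1, and let p_n be the kernel defined by p_0 = 1, p_n = Σ_{j=1}^{n}(a_{j-1}-a_j)p_{n-j} with a_i = (i+1)^{1-α} - i^{1-α}. Then there is a constant C = C(α,γ) with Σ_{j=1}^{n} p_{n-j} j^{-γ} ≤ C n^{α-γ} for all n ≥ 1. -/

import Mathlib

noncomputable def L1a (α : ℝ) (i : ℕ) : ℝ := ((i : ℝ) + 1) ^ (1 - α) - (i : ℝ) ^ (1 - α)

noncomputable def L1p (α : ℝ) : ℕ → ℝ
  | 0 => 1
  | n + 1 => ∑ j : Fin (n + 1), (L1a α j - L1a α (j + 1)) * L1p α (n - j)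

/-!
The sequence `a = L1a α` is positive, decreasing and log-convex (Cauchy's mean value theorem for
`x ^ (1 - α)` and `(x + 1) ^ (1 - α)`), and `p = L1p α` is its renewal sequence:
`∑_{k ≤ n} p k * a (n - k) = 1`. By Kaluza's theorem `p` is nonincreasing, and since
`a n ≥ (1 - α) (n + 1) ^ (-α)` the renewal identity gives `∑_{k < n} p k ≤ n ^ α / (1 - α)`.
As `j ↦ p (n - j)` increases while `j ↦ j ^ (-γ)` decreases, Chebyshev's sum inequality gives
`n * ∑_{j ≤ n} p (n - j) j ^ (-γ) ≤ (∑_{k < n} p k) (∑_{j ≤ n} j ^ (-γ))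
  ≤ n ^ α / (1 - α) * n ^ (1 - γ) / (1 - γ)`.
-/

open Finset

structure IsRenewalSequence (a p : ℕ → ℝ) : Prop where
  zero : p 0 = 1
  succ : ∀ n, p (n + 1) = ∑ j ∈ range (n + 1), (a j - a (j + 1)) * p (n - j)

namespace IsRenewalSequence

variable {a p : ℕ → ℝ}

theorem sum_mul_eq_one (h : IsRenewalSequence a p) (ha0 : a 0 = 1) (n : ℕ) :
    ∑ k ∈ range (n + 1), p k * a (n - k) = 1 := by
  induction n with
  | zero => simp [h.zero, ha0]
  | succ n ih =>
    have hsucc : p (n + 1) = ∑ k ∈ range (n + 1), (a (n - k) - a (n + 1 - k)) * p k := by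
      rw [h.succ, ← sum_range_reflect]
      refine sum_congr rfl fun k hk => ?_
      have hk : k < n + 1 := mem_range.mp hk
      rw [show n + 1 - 1 - k = n - k by omega, show n - (n - k) = k by omega,
        show n - k + 1 = n + 1 - k by omega]
    rw [sum_range_succ, Nat.sub_self, ha0, mul_one, hsucc, ← ih, ← sum_add_distrib]
    exact sum_congr rfl fun k _ => by ring

theorem nonneg (h : IsRenewalSequence a p) (ha : Antitone a) (n : ℕ) : 0 ≤ p n := by
  induction n using Nat.strong_induction_on with
  | _ n ih =>
    rcases n with _ | n
    · simp [h.zero]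
    rw [h.succ]
    exact sum_nonneg fun j _ =>
      mul_nonneg (sub_nonneg.mpr (ha j.le_succ)) (ih _ (by omega))

theorem sum_sub_mul_eq (h : IsRenewalSequence a p) (ha0 : a 0 = 1) (n : ℕ) :
    ∑ i ∈ range (n + 1), (p i - p (i + 1)) * a (n - i) = a (n + 1) := by
  have hshift := h.sum_mul_eq_one ha0 (n + 1)
  rw [sum_range_succ', h.zero, Nat.sub_zero, one_mul] at hshift
  simp only [Nat.add_sub_add_right] at hshift
  simp only [sub_mul, sum_sub_distrib, h.sum_mul_eq_one ha0 n]
  linarith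

/-- Kaluza's theorem: a log-convex `a` yields a nonincreasing renewal sequence. -/
theorem antitone (h : IsRenewalSequence a p) (ha0 : a 0 = 1) (hpos : ∀ n, 0 < a n)
    (hlogconvex : ∀ m n, m ≤ n → a (m + 1) * a n ≤ a m * a (n + 1)) : Antitone p := by
  refine antitone_nat_of_succ_le fun n => ?_
  induction n using Nat.strong_induction_on with
  | _ n ih =>
    have hn := h.sum_sub_mul_eq ha0 n
    rw [sum_range_succ, Nat.sub_self, ha0, mul_one] at hn
    suffices ∑ i ∈ range n, (p i - p (i + 1)) * a (n - i) ≤ a (n + 1) by linarith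
    rcases n with _ | m
    · simpa using (hpos 1).le
    refine le_of_mul_le_mul_right ?_ (hpos (m + 1))
    rw [sum_mul]
    calc ∑ i ∈ range (m + 1), (p i - p (i + 1)) * a (m + 1 - i) * a (m + 1)
        ≤ ∑ i ∈ range (m + 1), (p i - p (i + 1)) * a (m - i) * a (m + 2) := by
          refine sum_le_sum fun i hi => ?_
          have hi : i < m + 1 := mem_range.mp hi
          have hd : 0 ≤ p i - p (i + 1) := sub_nonneg.mpr (ih i hi)
          have hr := hlogconvex (m - i) (m + 1) (by omega)
          rw [show m - i + 1 = m + 1 - i by omega] at hr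
          rw [mul_assoc, mul_assoc]
          exact mul_le_mul_of_nonneg_left hr hd
      _ = a (m + 1 + 1) * a (m + 1) := by
          rw [← sum_mul, h.sum_sub_mul_eq ha0 m]; ring

theorem sum_range_mul_le_one (h : IsRenewalSequence a p) (ha0 : a 0 = 1) (ha : Antitone a)
    (n : ℕ) : (∑ k ∈ range (n + 1), p k) * a n ≤ 1 := by
  rw [sum_mul, ← h.sum_mul_eq_one ha0 n]
  exact sum_le_sum fun k _ =>
    mul_le_mul_of_nonneg_left (ha (Nat.sub_le n k)) (h.nonneg ha k)

end IsRenewalSequence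

section

variable {α : ℝ}

theorem hasDerivAt_rpow_one_sub {x : ℝ} (hx : 0 < x) :
    HasDerivAt (fun x : ℝ => x ^ (1 - α)) ((1 - α) * x ^ (-α)) x := by
  simpa [show 1 - α - 1 = -α by ring] using
    Real.hasDerivAt_rpow_const (p := 1 - α) (Or.inl hx.ne')

theorem continuous_rpow_one_sub (hα1 : α ≤ 1) : Continuous (fun x : ℝ => x ^ (1 - α)) :=
  continuous_id.rpow_const fun _ => Or.inr (by linarith)

theorem L1a_zero (hα1 : α < 1) : L1a α 0 = 1 := by
  simp [L1a, Real.zero_rpow (by linarith : 1 - α ≠ 0)]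

theorem L1a_pos (hα1 : α < 1) (i : ℕ) : 0 < L1a α i :=
  sub_pos.mpr (Real.rpow_lt_rpow i.cast_nonneg (lt_add_one _) (by linarith))

theorem sum_range_L1a (hα1 : α < 1) (n : ℕ) : ∑ i ∈ range n, L1a α i = (n : ℝ) ^ (1 - α) := by
  simpa [L1a, Real.zero_rpow (by linarith : 1 - α ≠ 0)] using
    sum_range_sub (fun i : ℕ => (i : ℝ) ^ (1 - α)) n

theorem exists_L1a_eq_mul_rpow (hα1 : α < 1) (i : ℕ) :
    ∃ c ∈ Set.Ioo (i : ℝ) (i + 1), L1a α i = (1 - α) * c ^ (-α) := by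
  obtain ⟨c, hc, hslope⟩ := exists_hasDerivAt_eq_slope (fun x : ℝ => x ^ (1 - α))
    (fun x => (1 - α) * x ^ (-α)) (lt_add_one (i : ℝ))
    (continuous_rpow_one_sub hα1.le).continuousOn
    fun x hx => hasDerivAt_rpow_one_sub (i.cast_nonneg.trans_lt hx.1)
  exact ⟨c, hc, by rw [hslope, add_sub_cancel_left, div_one, L1a]⟩

theorem one_sub_mul_rpow_neg_le_L1a (hα0 : 0 ≤ α) (hα1 : α < 1) (i : ℕ) :
    (1 - α) * ((i : ℝ) + 1) ^ (-α) ≤ L1a α i := by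
  obtain ⟨c, hc, hrepr⟩ := exists_L1a_eq_mul_rpow hα1 i
  rw [hrepr]
  exact mul_le_mul_of_nonneg_left
    (Real.rpow_le_rpow_of_nonpos (i.cast_nonneg.trans_lt hc.1) hc.2.le (by linarith))
    (by linarith)

/-- Cauchy's mean value theorem for `x ↦ (x + 1) ^ (1 - α)` and `x ↦ x ^ (1 - α)` on
`[i, i + 1]`. -/
theorem exists_L1a_succ_mul_eq (hα1 : α < 1) (i : ℕ) :
    ∃ c ∈ Set.Ioo (i : ℝ) (i + 1), L1a α (i + 1) * c ^ (-α) = L1a α i * (c + 1) ^ (-α) := by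
  obtain ⟨c, hc, hcauchy⟩ := exists_ratio_hasDerivAt_eq_ratio_slope
    (fun x : ℝ => (x + 1) ^ (1 - α)) (fun x => (1 - α) * (x + 1) ^ (-α)) (lt_add_one (i : ℝ))
    ((continuous_rpow_one_sub hα1.le).comp (continuous_add_const 1)).continuousOn
    (fun x hx => (hasDerivAt_rpow_one_sub
      (by linarith [i.cast_nonneg.trans_lt hx.1])).comp_add_const x 1)
    (fun x : ℝ => x ^ (1 - α)) (fun x => (1 - α) * x ^ (-α))
    (continuous_rpow_one_sub hα1.le).continuousOn
    fun x hx => hasDerivAt_rpow_one_sub (i.cast_nonneg.trans_lt hx.1)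
  refine ⟨c, hc, mul_left_cancel₀ (by linarith : 1 - α ≠ 0) ?_⟩
  simp only [L1a, Nat.cast_add, Nat.cast_one] at hcauchy ⊢
  linear_combination -hcauchy

theorem L1a_antitone (hα0 : 0 ≤ α) (hα1 : α < 1) : Antitone (L1a α) := by
  refine antitone_nat_of_succ_le fun i => ?_
  obtain ⟨c, hc, hcauchy⟩ := exists_L1a_succ_mul_eq hα1 i
  have hc0 : 0 < c := i.cast_nonneg.trans_lt hc.1
  refine le_of_mul_le_mul_right ?_ (Real.rpow_pos_of_pos hc0 (-α))
  rw [hcauchy]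
  exact mul_le_mul_of_nonneg_left
    (Real.rpow_le_rpow_of_nonpos hc0 (by linarith) (by linarith)) (L1a_pos hα1 i).le

theorem L1a_succ_mul_le (hα0 : 0 ≤ α) (hα1 : α < 1) {m n : ℕ} (hmn : m ≤ n) :
    L1a α (m + 1) * L1a α n ≤ L1a α m * L1a α (n + 1) := by
  rcases hmn.eq_or_lt with rfl | hmn
  · exact (mul_comm _ _).le
  obtain ⟨c, hc, hm⟩ := exists_L1a_succ_mul_eq hα1 m
  obtain ⟨d, hd, hn⟩ := exists_L1a_succ_mul_eq hα1 n
  have hc0 : 0 < c := m.cast_nonneg.trans_lt hc.1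
  have hd0 : 0 < d := n.cast_nonneg.trans_lt hd.1
  have hcd : c ≤ d := by
    have : (m : ℝ) + 1 ≤ n := by exact_mod_cast hmn
    linarith [hc.2, hd.1]
  -- the ratio `L1a α (i + 1) / L1a α i = (1 + 1 / c) ^ (-α)` increases with `c`
  have hratio : (c + 1) ^ (-α) * d ^ (-α) ≤ c ^ (-α) * (d + 1) ^ (-α) := by
    rw [← Real.mul_rpow (by linarith) (by linarith), ← Real.mul_rpow hc0.le (by linarith)]
    exact Real.rpow_le_rpow_of_nonpos (by positivity) (by nlinarith) (by linarith)
  have hpos : 0 < c ^ (-α) * d ^ (-α) :=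
    mul_pos (Real.rpow_pos_of_pos hc0 _) (Real.rpow_pos_of_pos hd0 _)
  refine le_of_mul_le_mul_right ?_ hpos
  calc L1a α (m + 1) * L1a α n * (c ^ (-α) * d ^ (-α))
      = L1a α m * L1a α n * ((c + 1) ^ (-α) * d ^ (-α)) := by
        linear_combination L1a α n * d ^ (-α) * hm
    _ ≤ L1a α m * L1a α n * (c ^ (-α) * (d + 1) ^ (-α)) :=
        mul_le_mul_of_nonneg_left hratio (mul_pos (L1a_pos hα1 m) (L1a_pos hα1 n)).le
    _ = L1a α m * L1a α (n + 1) * (c ^ (-α) * d ^ (-α)) := by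
        linear_combination -(L1a α m * c ^ (-α)) * hn


theorem isRenewalSequence_L1p : IsRenewalSequence (L1a α) (L1p α) where
  zero := by rw [L1p]
  succ n := by
    rw [L1p]
    exact Fin.sum_univ_eq_sum_range
      (fun j => (L1a α j - L1a α (j + 1)) * L1p α (n - j)) (n + 1)

theorem L1p_antitone (hα0 : 0 ≤ α) (hα1 : α < 1) : Antitone (L1p α) :=
  isRenewalSequence_L1p.antitone (L1a_zero hα1) (L1a_pos hα1) fun _ _ =>
    L1a_succ_mul_le hα0 hα1

theorem sum_range_L1p_le (hα0 : 0 ≤ α) (hα1 : α < 1) (n : ℕ) :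
    ∑ k ∈ range n, L1p α k ≤ (n : ℝ) ^ α / (1 - α) := by
  rcases n with _ | n
  · simpa using div_nonneg (Real.rpow_nonneg le_rfl α) (by linarith : (0 : ℝ) ≤ 1 - α)
  have hn : (0 : ℝ) < n + 1 := by positivity
  have ha := L1a_antitone hα0 hα1
  have hsum : (∑ k ∈ range (n + 1), L1p α k) * ((1 - α) * ((n : ℝ) + 1) ^ (-α)) ≤ 1 :=
    (mul_le_mul_of_nonneg_left (one_sub_mul_rpow_neg_le_L1a hα0 hα1 n)
      (sum_nonneg fun k _ => isRenewalSequence_L1p.nonneg ha k)).trans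
      (isRenewalSequence_L1p.sum_range_mul_le_one (L1a_zero hα1) ha n)
  rw [Real.rpow_neg hn.le, ← div_eq_mul_inv, mul_div_assoc', div_le_one (by positivity)] at hsum
  rwa [le_div_iff₀ (by linarith), Nat.cast_add_one]

end

theorem sum_Icc_rpow_neg_le {γ : ℝ} (hγ0 : 0 ≤ γ) (hγ1 : γ < 1) (n : ℕ) :
    ∑ j ∈ Icc 1 n, (j : ℝ) ^ (-γ) ≤ (n : ℝ) ^ (1 - γ) / (1 - γ) := by
  rw [le_div_iff₀ (by linarith), ← sum_range_L1a hγ1, ← Ico_add_one_right_eq_Icc,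
    sum_Ico_eq_sum_range, add_tsub_cancel_right, sum_mul]
  refine sum_le_sum fun i _ => ?_
  rw [mul_comm, add_comm 1 i, Nat.cast_add_one]
  exact one_sub_mul_rpow_neg_le_L1a hγ0 hγ1 i

theorem L1p_conv_bound_small_gamma (α γ : ℝ) (hα0 : 0 < α) (hα1 : α < 1)
    (hγ0 : 0 ≤ γ) (hγ1 : γ < 1) :
    ∃ C : ℝ, 0 < C ∧ ∀ n : ℕ, 1 ≤ n →
      ∑ j ∈ Finset.Icc 1 n, L1p α (n - j) * (j : ℝ) ^ (-γ) ≤ C * (n : ℝ) ^ (α - γ) := by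
  refine ⟨1 / (1 - α) / (1 - γ), div_pos (one_div_pos.mpr (sub_pos.mpr hα1)) (sub_pos.mpr hγ1),
    fun n hn => ?_⟩
  have hn0 : (0 : ℝ) < n := by exact_mod_cast hn
  have hanti : AntivaryOn (fun j => L1p α (n - j)) (fun j : ℕ => (j : ℝ) ^ (-γ)) ↑(Icc 1 n) :=
    MonotoneOn.antivaryOn
      (fun i _ j _ hij => L1p_antitone hα0.le hα1 (Nat.sub_le_sub_left hij n))
      fun i hi j _ hij => Real.rpow_le_rpow_of_nonpos (by exact_mod_cast (mem_Icc.mp hi).1)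
        (by exact_mod_cast hij) (by linarith)
  have hcheb := hanti.card_mul_sum_le_sum_mul_sum
  have hreflect : ∑ j ∈ Icc 1 n, L1p α (n - j) = ∑ k ∈ range n, L1p α k := by
    rw [← Ico_add_one_right_eq_Icc, sum_Ico_reflect _ _ le_rfl, Nat.sub_self, Nat.add_sub_cancel,
      range_eq_Ico]
  rw [Nat.card_Icc, Nat.add_sub_cancel, hreflect] at hcheb
  refine le_of_mul_le_mul_left ?_ hn0
  calc (n : ℝ) * ∑ j ∈ Icc 1 n, L1p α (n - j) * (j : ℝ) ^ (-γ)
      ≤ (n : ℝ) ^ α / (1 - α) * ((n : ℝ) ^ (1 - γ) / (1 - γ)) :=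
        hcheb.trans <| mul_le_mul (sum_range_L1p_le hα0.le hα1 n)
          (sum_Icc_rpow_neg_le hγ0 hγ1 n) (sum_nonneg fun j _ => by positivity) (by positivity)
    _ = n * (1 / (1 - α) / (1 - γ) * (n : ℝ) ^ (α - γ)) := by
        rw [show α - γ = α + (1 - γ) - 1 by ring, Real.rpow_sub_one hn0.ne', Real.rpow_add hn0]
        field_simp
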